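/- For a divisor d > 1 of n and 0 ≤ k ≤ n, each cyclotomic factor φ_d(q) appears in the Gaussian binomial coefficient [n choose k]_q with multiplicity at most 1. -/

import Mathlib

open Polynomial Finset

/-- The q-analog `[m]_q = 1 + q + ⋯ + q^{m-1}` as a polynomial over `ℚ`. -/
noncomputable def qAnalog (m : ℕ) : Polynomial ℚ := ∑ i ∈ Finset.range m, X ^ i

/-- The q-factorial `[m]_q! = ∏_{i=1}^m [i]_q`. -/
noncomputable def qFactorial (m : ℕ) : Polynomial ℚ :=
  ∏ i ∈ Finset.range m, qAnalog (i + 1)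

/-- The Gaussian binomial coefficient `[n choose k]_q = [n]_q! / ([k]_q! [n-k]_q!)`,
defined via division by the (monic) denominator. -/
noncomputable def qBinom (n k : ℕ) : Polynomial ℚ :=
  qFactorial n /ₘ (qFactorial k * qFactorial (n - k))

/-!
Since `[m]_q = ∏_{1 < e ∣ m} φ_e(q)`, the q-factorial is `[m]_q! = ∏_{e ≥ 2} φ_e(q)^⌊m/e⌋`, and
hence `[n choose k]_q = ∏_{e ≥ 2} φ_e(q)^(⌊n/e⌋ - ⌊k/e⌋ - ⌊(n-k)/e⌋)`. Each exponent is at most `1`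
because `⌊(a+b)/e⌋ ≤ ⌊a/e⌋ + ⌊b/e⌋ + 1`, and the `φ_e` are pairwise coprime irreducibles over `ℚ`.
-/

lemma qAnalog_eq_prod_cyclotomic {m : ℕ} (hm : 0 < m) :
    qAnalog m = ∏ e ∈ m.divisors.erase 1, cyclotomic e ℚ :=
  (prod_cyclotomic_eq_geom_sum hm ℚ).symm

lemma divisors_erase_one_eq_filter_Icc {m N : ℕ} (hm : 0 < m) (hmN : m ≤ N) :
    m.divisors.erase 1 = (Icc 2 N).filter (· ∣ m) := by
  ext e
  simp only [mem_erase, Nat.mem_divisors, mem_filter, mem_Icc]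
  constructor
  · rintro ⟨he1, hem, -⟩
    have he0 : e ≠ 0 := by rintro rfl; omega
    exact ⟨⟨by omega, (Nat.le_of_dvd hm hem).trans hmN⟩, hem⟩
  · rintro ⟨⟨he2, -⟩, hem⟩
    exact ⟨by omega, hem, by omega⟩

lemma qFactorial_eq_prod_cyclotomic_pow {m N : ℕ} (hmN : m ≤ N) :
    qFactorial m = ∏ e ∈ Icc 2 N, cyclotomic e ℚ ^ (m / e) := by
  induction m with
  | zero => simp [qFactorial]
  | succ m ih =>
    rw [qFactorial, prod_range_succ, ← qFactorial, ih (by omega),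
      qAnalog_eq_prod_cyclotomic m.succ_pos, divisors_erase_one_eq_filter_Icc m.succ_pos hmN,
      prod_filter, ← prod_mul_distrib]
    refine prod_congr rfl fun e _ => ?_
    rw [Nat.succ_div]
    split_ifs <;> simp [pow_succ]

lemma qFactorial_monic (m : ℕ) : (qFactorial m).Monic := by
  rw [qFactorial_eq_prod_cyclotomic_pow le_rfl]
  exact monic_prod_of_monic _ _ fun e _ => (cyclotomic.monic e ℚ).pow _

lemma qBinom_eq_prod_cyclotomic_pow {n k N : ℕ} (hk : k ≤ n) (hnN : n ≤ N) :
    qBinom n k = ∏ e ∈ Icc 2 N, cyclotomic e ℚ ^ (n / e - k / e - (n - k) / e) := by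
  have hfac : qFactorial n = qFactorial k * qFactorial (n - k) *
      ∏ e ∈ Icc 2 N, cyclotomic e ℚ ^ (n / e - k / e - (n - k) / e) := by
    rw [qFactorial_eq_prod_cyclotomic_pow hnN, qFactorial_eq_prod_cyclotomic_pow (hk.trans hnN),
      qFactorial_eq_prod_cyclotomic_pow ((n.sub_le k).trans hnN), ← prod_mul_distrib,
      ← prod_mul_distrib]
    refine prod_congr rfl fun e _ => ?_
    have hsum : k / e + (n - k) / e ≤ n / e := by
      simpa [Nat.add_sub_cancel' hk] using Nat.div_add_div_le_add_div (x := k) (y := n - k) (z := e)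
    rw [← pow_add, ← pow_add, Nat.sub_sub, Nat.add_sub_cancel' hsum]
  rw [qBinom, hfac, mul_divByMonic_cancel_left _ ((qFactorial_monic k).mul (qFactorial_monic _))]

lemma div_sub_div_sub_div_le_one {n k : ℕ} (hk : k ≤ n) (e : ℕ) :
    n / e - k / e - (n - k) / e ≤ 1 := by
  have := Nat.add_div_le_div_add_div_add_one k (n - k) e
  rw [Nat.add_sub_cancel' hk] at this
  omega

lemma cyclotomic_pow_succ_not_dvd_prod_cyclotomic_pow {d : ℕ} (hd : 0 < d) {s : Finset ℕ}
    (hds : d ∈ s) (f : ℕ → ℕ) :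
    ¬ cyclotomic d ℚ ^ (f d + 1) ∣ ∏ e ∈ s, cyclotomic e ℚ ^ f e := by
  have hprime : Prime (cyclotomic d ℚ) := (cyclotomic.irreducible_rat hd).prime
  rw [← mul_prod_erase s _ hds, pow_succ,
    mul_dvd_mul_iff_left (pow_ne_zero _ (cyclotomic_ne_zero d ℚ))]
  intro hdvd
  obtain ⟨e, he, hde⟩ := hprime.exists_mem_finset_dvd hdvd
  exact hprime.not_isUnit <| (cyclotomic.isCoprime_rat (mem_erase.1 he).1.symm).isUnit_of_dvd'
    dvd_rfl (hprime.dvd_of_dvd_pow hde)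

theorem stmt_1_general (n d k : ℕ) (hd : 1 < d) (hk : k ≤ n) :
    ¬ (cyclotomic d ℚ) ^ 2 ∣ qBinom n k := by
  rw [qBinom_eq_prod_cyclotomic_pow hk (le_max_left n d)]
  intro hdvd
  refine cyclotomic_pow_succ_not_dvd_prod_cyclotomic_pow (by omega)
    (mem_Icc.2 ⟨hd, le_max_right n d⟩) _ ((pow_dvd_pow _ ?_).trans hdvd)
  exact Nat.succ_le_succ (div_sub_div_sub_div_le_one hk d)

/-- For a divisor `d > 1` of `n` and `0 ≤ k ≤ n`, the cyclotomic factor `φ_d(q)` appears in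
the Gaussian binomial coefficient `[n choose k]_q` with multiplicity at most 1. -/
theorem stmt_1 (n d k : ℕ) (hdn : d ∣ n) (hd : 1 < d) (hk : k ≤ n) :
    ¬ (cyclotomic d ℚ) ^ 2 ∣ qBinom n k :=
  stmt_1_general n d k hd hk
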